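/- arXiv:2404.05131 — 7 statements merged into one kernel-verified Lean document; each statement's English description precedes it below -/
import Mathlib

section
/- Let G act without inversion on a graph Y such that G acts freely on the directed edge set E_Y. Then the natural morphism of graphs p: Y -> G\Y to the quotient graph is a branched cover, and for each vertex w of Y the ramification index m_w equals the cardinality of the stabilizer Stab_G(w). -/
/-- A graph in Serre's formalism. -/
structure SerreGraph where
  V : Type
  E : Type
  o : E → V
  t : E → V
  inv : E → E
  inv_ne : ∀ e, inv e ≠ e
  inv_inv : ∀ e, inv (inv e) = e
  o_inv : ∀ e, o (inv e) = t e

namespace SerreGraph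

variable (X : SerreGraph)

/-- `Adj a b` : there is a directed edge from `a` to `b`. -/
def Adj (a b : X.V) : Prop := ∃ e, X.o e = a ∧ X.t e = b

/-- A graph is connected if any two vertices are joined by a path of directed edges. -/
def Connected : Prop := ∀ a b : X.V, Relation.ReflTransGen X.Adj a b

/-- The degree (sum of coefficients) map `s : Div(X) → ℤ`. -/
noncomputable def degMap : (X.V →₀ ℤ) →ₗ[ℤ] ℤ :=
  Finsupp.lsum ℤ fun _ => (LinearMap.id : ℤ →ₗ[ℤ] ℤ)

/-- The valency of a vertex: the number of directed edges with origin `v`. -/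
noncomputable def val (v : X.V) : ℕ := Nat.card {e : X.E // X.o e = v}

/-- The Laplacian operator `L = D - A` on `Div(X)`, the free abelian group on vertices. -/
noncomputable def lap : (X.V →₀ ℤ) →ₗ[ℤ] (X.V →₀ ℤ) :=
  Finsupp.lsum ℤ fun v => LinearMap.toSpanSingleton ℤ _
    ((X.val v : ℤ) • Finsupp.single v (1 : ℤ)
      - ∑ᶠ e : {e : X.E // X.o e = v}, Finsupp.single (X.t e.1) (1 : ℤ))

/-- The degree operator `D` on `Div(X)`. -/
noncomputable def degOp : (X.V →₀ ℤ) →ₗ[ℤ] (X.V →₀ ℤ) :=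
  Finsupp.lsum ℤ fun v => LinearMap.toSpanSingleton ℤ _
    ((X.val v : ℤ) • Finsupp.single v (1 : ℤ))

/-- The adjacency operator `A` on `Div(X)`. -/
noncomputable def adjOp : (X.V →₀ ℤ) →ₗ[ℤ] (X.V →₀ ℤ) :=
  Finsupp.lsum ℤ fun v => LinearMap.toSpanSingleton ℤ _
    (∑ᶠ e : {e : X.E // X.o e = v}, Finsupp.single (X.t e.1) (1 : ℤ))

/-- Degree-zero divisors. -/
noncomputable def Div0 : Submodule ℤ (X.V →₀ ℤ) := LinearMap.ker X.degMap

/-- Principal divisors: the image of the Laplacian. -/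
noncomputable def Pr : Submodule ℤ (X.V →₀ ℤ) := LinearMap.range X.lap

/-- The Picard group of degree zero: `Div⁰(X)/Pr(X)`. -/
noncomputable def Pic0 := X.Div0 ⧸ X.Pr.comap X.Div0.subtype

noncomputable instance : AddCommGroup X.Pic0 :=
  inferInstanceAs (AddCommGroup (X.Div0 ⧸ X.Pr.comap X.Div0.subtype))

noncomputable instance : Module ℤ X.Pic0 :=
  inferInstanceAs (Module ℤ (X.Div0 ⧸ X.Pr.comap X.Div0.subtype))

/-- Morphisms of graphs in Serre's formalism. -/
structure Hom (Y X : SerreGraph) where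
  fV : Y.V → X.V
  fE : Y.E → X.E
  o_map : ∀ e, X.o (fE e) = fV (Y.o e)
  t_map : ∀ e, X.t (fE e) = fV (Y.t e)
  inv_map : ∀ e, X.inv (fE e) = fE (Y.inv e)

/-- A branched cover with ramification indices `m`: surjective on vertices and
directed edges, and over each edge at `f(w)` the fiber in the edges at `w`
has cardinality `m w`. -/
def IsBranchedCover {Y X : SerreGraph} (f : Hom Y X) (m : Y.V → ℕ) : Prop :=
  Function.Surjective f.fV ∧ Function.Surjective f.fE ∧
    ∀ (w : Y.V) (e : X.E), X.o e = f.fV w →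
      Nat.card {ε : Y.E // Y.o ε = w ∧ f.fE ε = e} = m w

/-- The pushforward `f_* : Div(Y) → Div(X)`, sending a vertex `w` to `f(w)`. -/
noncomputable def pushforward {Y X : SerreGraph} (f : Hom Y X) :
    (Y.V →₀ ℤ) →ₗ[ℤ] (X.V →₀ ℤ) :=
  Finsupp.lmapDomain ℤ ℤ f.fV

end SerreGraph

/-! Fix an edge `e` at `p(w)`; translating it by an element of `G` we may assume `o e = w`.
The edges at `w` in the orbit of `e` are then exactly the `g • e` with `g ∈ Stab_G(w)`, and
since `G` acts freely on edges, distinct `g` give distinct edges. -/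

open MulAction

section FreeAction

variable {G α β : Type*} [Group G] [MulAction G α] [MulAction G β]

theorem smul_left_injective_of_free (hfree : ∀ (g : G) (b : β), g • b = b → g = 1) (b : β) :
    Function.Injective (· • b : G → β) := by
  intro g g' h
  have hfix : (g'⁻¹ * g) • b = b := by
    rw [mul_smul, show g • b = g' • b from h, inv_smul_smul]
  exact (inv_mul_eq_one.mp (hfree _ _ hfix)).symm

noncomputable def stabilizerEquivFiberInOrbit {f : β → α}
    (hf : ∀ (g : G) (b : β), f (g • b) = g • f b)
    (hfree : ∀ (g : G) (b : β), g • b = b → g = 1) (b : β) :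
    stabilizer G (f b) ≃ {b' : β // f b' = f b ∧ b' ∈ orbit G b} :=
  Equiv.ofBijective (fun g => ⟨(g : G) • b, by rw [hf, g.2], mem_orbit b (g : G)⟩)
    ⟨fun g g' h => Subtype.ext (smul_left_injective_of_free hfree b (congrArg Subtype.val h)),
      fun ⟨_, hb', g, hg⟩ => ⟨⟨g, by rw [mem_stabilizer_iff, ← hf, ← hb', ← hg]⟩, Subtype.ext hg⟩⟩

theorem card_fiber_in_orbit_eq_card_stabilizer {f : β → α}
    (hf : ∀ (g : G) (b : β), f (g • b) = g • f b)
    (hfree : ∀ (g : G) (b : β), g • b = b → g = 1) {w : α} {b : β}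
    (hb : Quotient.mk (orbitRel G α) (f b) = Quotient.mk (orbitRel G α) w) :
    Nat.card {b' : β // f b' = w ∧
        Quotient.mk (orbitRel G β) b' = Quotient.mk (orbitRel G β) b}
      = Nat.card (stabilizer G w) := by
  obtain ⟨σ, hσ⟩ := orbitRel_apply.mp (Quotient.exact hb)
  have hw : f (σ⁻¹ • b) = w := by
    rw [hf, ← show σ • w = f b from hσ, inv_smul_smul]
  subst hw
  refine Nat.card_congr ((Equiv.subtypeEquivRight fun b' => ?_).trans
    (stabilizerEquivFiberInOrbit hf hfree (σ⁻¹ • b)).symm)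
  rw [Quotient.eq, orbitRel_apply, orbit_smul]

end FreeAction

open SerreGraph MulAction in
theorem quotient_map_is_branched_cover_general (Y : SerreGraph) (G : Type) [Group G]
    [MulAction G Y.V] [MulAction G Y.E]
    (ho : ∀ (σ : G) (e : Y.E), Y.o (σ • e) = σ • Y.o e)
    (hfreeE : ∀ (σ : G) (e : Y.E), σ • e = e → σ = 1) :
    Function.Surjective (Quotient.mk (orbitRel G Y.V)) ∧
    Function.Surjective (Quotient.mk (orbitRel G Y.E)) ∧
    ∀ (w : Y.V) (e : Y.E),
      Quotient.mk (orbitRel G Y.V) (Y.o e) = Quotient.mk (orbitRel G Y.V) w →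
        Nat.card {e' : Y.E // Y.o e' = w ∧
            Quotient.mk (orbitRel G Y.E) e' = Quotient.mk (orbitRel G Y.E) e}
          = Nat.card (stabilizer G w) :=
  ⟨Quotient.mk''_surjective, Quotient.mk''_surjective,
    fun _ _ he => card_fiber_in_orbit_eq_card_stabilizer ho hfreeE he⟩

open SerreGraph MulAction in
/-- If `G` acts without inversion on `Y` and freely on the directed edges,
then the natural map `p : Y → G\Y` to the quotient graph is a branched cover: `p` is
surjective on vertices and edges (being a quotient map), and for every vertex `w` and every
quotient edge at `p(w)` the fiber in the edges at `w` has cardinality `|Stab_G(w)|`. -/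
theorem quotient_map_is_branched_cover (Y : SerreGraph) (G : Type) [Group G]
    [MulAction G Y.V] [MulAction G Y.E]
    (ho : ∀ (σ : G) (e : Y.E), Y.o (σ • e) = σ • Y.o e)
    (ht : ∀ (σ : G) (e : Y.E), Y.t (σ • e) = σ • Y.t e)
    (hinv : ∀ (σ : G) (e : Y.E), Y.inv (σ • e) = σ • Y.inv e)
    (hni : ∀ (σ : G) (e : Y.E), σ • e ≠ Y.inv e)
    (hfreeE : ∀ (σ : G) (e : Y.E), σ • e = e → σ = 1) :
    Function.Surjective (Quotient.mk (orbitRel G Y.V)) ∧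
    Function.Surjective (Quotient.mk (orbitRel G Y.E)) ∧
    ∀ (w : Y.V) (e : Y.E),
      Quotient.mk (orbitRel G Y.V) (Y.o e) = Quotient.mk (orbitRel G Y.V) w →
        Nat.card {e' : Y.E // Y.o e' = w ∧
            Quotient.mk (orbitRel G Y.E) e' = Quotient.mk (orbitRel G Y.E) e}
          = Nat.card (stabilizer G w) :=
  quotient_map_is_branched_cover_general Y G ho hfreeE
end

section
/- Let f: Y -> X be a branched cover of locally finite graphs with finite ramification indices. Define f_*: Div(Y) -> Div(X) by w -> f(w) and f_r: Div(Y) -> Div(X) by w -> m_w·f(w). Then L_X ∘ f_r = f_* ∘ L_Y, i.e., the pushforward maps intertwine the Laplacians. -/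
namespace SerreGraph

/-- The ramified pushforward `f_r : Div(Y) → Div(X)` sending a vertex `w` to `m_w · f(w)`. -/
noncomputable def pushforwardRam {Y X : SerreGraph} (f : Hom Y X) (m : Y.V → ℕ) :
    (Y.V →₀ ℤ) →ₗ[ℤ] (X.V →₀ ℤ) :=
  Finsupp.lsum ℤ fun w => LinearMap.toSpanSingleton ℤ _ (Finsupp.single (f.fV w) (m w : ℤ))

end SerreGraph

open SerreGraph in
/-- The fiber decomposition of the edges at `w` over the edges at `f w`. -/
private def fiberEquiv (Y X : SerreGraph) (f : Hom Y X) (w : Y.V) :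
    {ε : Y.E // Y.o ε = w} ≃
      Σ e : {e : X.E // X.o e = f.fV w}, {ε : Y.E // Y.o ε = w ∧ f.fE ε = e.1} where
  toFun ε := ⟨⟨f.fE ε.1, by rw [f.o_map, ε.2]⟩, ⟨ε.1, ε.2, rfl⟩⟩
  invFun p := ⟨p.2.1, p.2.2.1⟩
  left_inv ε := rfl
  right_inv p := by
    obtain ⟨⟨e, he⟩, ⟨ε, h1, h2⟩⟩ := p
    dsimp only at h2
    refine Sigma.ext (Subtype.ext h2) ((Subtype.heq_iff_coe_eq fun x => ?_).2 rfl)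
    simp [h2]

open SerreGraph in
/-- For a branched cover `f : Y → X` of locally finite graphs with finite
ramification indices `m`, the pushforwards intertwine the Laplacians:
`L_X ∘ f_r = f_* ∘ L_Y`. -/
theorem laplacian_intertwine (Y X : SerreGraph) (f : Hom Y X) (m : Y.V → ℕ)
    [∀ v : Y.V, Finite {e : Y.E // Y.o e = v}]
    [∀ v : X.V, Finite {e : X.E // X.o e = v}]
    (hbc : IsBranchedCover f m) :
    X.lap ∘ₗ pushforwardRam f m = pushforward f ∘ₗ Y.lap := by
  classical
  apply Finsupp.lhom_ext
  intro w c
  letI : Fintype {e : X.E // X.o e = f.fV w} := Fintype.ofFinite _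
  letI : Fintype {ε : Y.E // Y.o ε = w} := Fintype.ofFinite _
  haveI hfibfin : ∀ e : X.E, Finite {ε : Y.E // Y.o ε = w ∧ f.fE ε = e} := fun e =>
    Finite.of_injective (fun ε => (⟨ε.1, ε.2.1⟩ : {ε : Y.E // Y.o ε = w}))
      (fun a b h => by simpa [Subtype.ext_iff] using h)
  letI : ∀ e : X.E, Fintype {ε : Y.E // Y.o ε = w ∧ f.fE ε = e} := fun e => Fintype.ofFinite _
  -- cardinality of each fiber
  have hfib : ∀ e : {e : X.E // X.o e = f.fV w},
      Fintype.card {ε : Y.E // Y.o ε = w ∧ f.fE ε = e.1} = m w := fun e => by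
    rw [← Nat.card_eq_fintype_card]
    exact hbc.2.2 w e.1 e.2
  -- valency relation
  have hval : Y.val w = X.val (f.fV w) * m w := by
    rw [SerreGraph.val, SerreGraph.val, Nat.card_congr (fiberEquiv Y X f w),
      Nat.card_eq_fintype_card, Fintype.card_sigma, Nat.card_eq_fintype_card]
    simp [hfib, Finset.sum_const, Finset.card_univ, mul_comm]
  -- the sum relation
  have hsum : ∑ ε : {ε : Y.E // Y.o ε = w},
        Finsupp.single (f.fV (Y.t ε.1)) (1 : ℤ)
      = (m w : ℤ) • ∑ e : {e : X.E // X.o e = f.fV w},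
          Finsupp.single (X.t e.1) (1 : ℤ) := by
    rw [← Equiv.sum_comp (fiberEquiv Y X f w).symm
      (fun ε => Finsupp.single (f.fV (Y.t ε.1)) (1 : ℤ)), ← Finset.univ_sigma_univ, Finset.sum_sigma]
    rw [Finset.smul_sum]
    refine Finset.sum_congr rfl fun e _ => ?_
    have hconst : ∀ ε : {ε : Y.E // Y.o ε = w ∧ f.fE ε = e.1},
        Finsupp.single (f.fV (Y.t (((fiberEquiv Y X f w).symm ⟨e, ε⟩) : Y.E))) (1 : ℤ)
          = Finsupp.single (X.t e.1) (1 : ℤ) := by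
      rintro ⟨ε, h1, h2⟩
      have : f.fV (Y.t ε) = X.t e.1 := by rw [← f.t_map, h2]
      simp [fiberEquiv, this]
    rw [Finset.sum_congr rfl (fun ε _ => hconst ε), Finset.sum_const, Finset.card_univ,
      hfib e]
    exact (Nat.cast_smul_eq_nsmul ℤ _ _).symm
  -- now compute both sides
  have hyfin : ∑ᶠ ε : {ε : Y.E // Y.o ε = w}, Finsupp.single (Y.t ε.1) (1 : ℤ)
      = ∑ ε : {ε : Y.E // Y.o ε = w}, Finsupp.single (Y.t ε.1) (1 : ℤ) :=
    finsum_eq_sum_of_fintype _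
  have hxfin : ∑ᶠ e : {e : X.E // X.o e = f.fV w}, Finsupp.single (X.t e.1) (1 : ℤ)
      = ∑ e : {e : X.E // X.o e = f.fV w}, Finsupp.single (X.t e.1) (1 : ℤ) :=
    finsum_eq_sum_of_fintype _
  have hmaps : Finsupp.lmapDomain ℤ ℤ f.fV
      ((Y.val w : ℤ) • Finsupp.single w (1 : ℤ)
        - ∑ ε : {ε : Y.E // Y.o ε = w}, Finsupp.single (Y.t ε.1) (1 : ℤ))
      = (Y.val w : ℤ) • Finsupp.single (f.fV w) (1 : ℤ)
        - ∑ ε : {ε : Y.E // Y.o ε = w}, Finsupp.single (f.fV (Y.t ε.1)) (1 : ℤ) := by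
    rw [map_sub, map_smul, map_sum]
    simp [Finsupp.lmapDomain_apply, Finsupp.mapDomain_single]
  have hsingle : (Finsupp.single (f.fV w) ((m w : ℤ)) : X.V →₀ ℤ)
      = (m w : ℤ) • Finsupp.single (f.fV w) (1 : ℤ) := by
    rw [Finsupp.smul_single, smul_eq_mul, mul_one]
  simp only [LinearMap.comp_apply, pushforwardRam, pushforward, SerreGraph.lap,
    Finsupp.lsum_single, LinearMap.toSpanSingleton_apply]
  rw [hsingle, smul_comm, map_smul, map_smul, Finsupp.lsum_single,
    LinearMap.toSpanSingleton_apply, one_smul, hxfin, hyfin, map_smul, hmaps, hsum, hval]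
  push_cast
  rw [smul_sub, smul_sub, smul_smul, smul_smul, smul_smul, mul_comm ((m w : ℤ))]
  module
end

section
/- If f: Y -> X is a branched cover of finite connected graphs, then f induces a surjective group homomorphism f_*: Pic^0(Y) -> Pic^0(X), and consequently the number of spanning trees of X divides the number of spanning trees of Y. -/
open Finsupp in
lemma SerreGraph.push_lap_single (Y X : SerreGraph) [Finite Y.E] [Finite X.E]
    (f : Hom Y X) (m : Y.V → ℕ)
    (hfib : ∀ (w : Y.V) (e : X.E), X.o e = f.fV w →
      Nat.card {ε : Y.E // Y.o ε = w ∧ f.fE ε = e} = m w) (w : Y.V) :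
    pushforward f (Y.lap (Finsupp.single w 1)) =
      X.lap (Finsupp.single (f.fV w) (m w : ℤ)) := by
  classical
  haveI : Fintype Y.E := Fintype.ofFinite _
  haveI : Fintype X.E := Fintype.ofFinite _
  set π : {ε : Y.E // Y.o ε = w} → {e : X.E // X.o e = f.fV w} :=
    fun ε => ⟨f.fE ε.1, by rw [f.o_map, ε.2]⟩ with hπ
  have hcard : ∀ e : {e : X.E // X.o e = f.fV w},
      Fintype.card {ε : {ε : Y.E // Y.o ε = w} // π ε = e} = m w := by
    intro e
    rw [← Nat.card_eq_fintype_card, ← hfib w e.1 e.2]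
    exact Nat.card_congr ⟨fun ε => ⟨ε.1.1, ε.1.2, congrArg Subtype.val ε.2⟩,
      fun ε => ⟨⟨ε.1, ε.2.1⟩, Subtype.ext ε.2.2⟩, fun _ => rfl, fun _ => rfl⟩
  have key : ∀ {M : Type} [AddCommMonoid M] (F : {e : X.E // X.o e = f.fV w} → M),
      ∑ ε : {ε : Y.E // Y.o ε = w}, F (π ε) = ∑ e, (m w) • F e := by
    intro M _ F
    rw [← Fintype.sum_fiberwise π (fun ε => F (π ε))]
    refine Finset.sum_congr rfl fun e _ => ?_
    calc ∑ ε : {ε : {ε : Y.E // Y.o ε = w} // π ε = e}, F (π ε.1)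
        = ∑ _ε : {ε : {ε : Y.E // Y.o ε = w} // π ε = e}, F e :=
          Finset.sum_congr rfl fun ε _ => by rw [ε.2]
      _ = (m w) • F e := by
          rw [Finset.sum_const, Finset.card_univ, hcard]
  have hval : (Y.val w) = (X.val (f.fV w)) * m w := by
    have h1 := key (M := ℕ) (fun _ => 1)
    simp only [smul_eq_mul, mul_one, Finset.sum_const, Finset.card_univ] at h1
    rw [val, val, Nat.card_eq_fintype_card, Nat.card_eq_fintype_card]
    exact h1
  have hlapY : Y.lap (Finsupp.single w 1)
      = ((Y.val w : ℤ) • Finsupp.single w (1:ℤ)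
        - ∑ ε : {ε : Y.E // Y.o ε = w}, Finsupp.single (Y.t ε.1) (1 : ℤ)) := by
    rw [lap, Finsupp.lsum_single, LinearMap.toSpanSingleton_apply, one_smul,
      finsum_eq_sum_of_fintype]
  have hlapX : X.lap (Finsupp.single (f.fV w) (m w : ℤ))
      = (m w : ℤ) • ((X.val (f.fV w) : ℤ) • Finsupp.single (f.fV w) (1:ℤ)
        - ∑ e : {e : X.E // X.o e = f.fV w}, Finsupp.single (X.t e.1) (1 : ℤ)) := by
    rw [lap, Finsupp.lsum_single, LinearMap.toSpanSingleton_apply,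
      finsum_eq_sum_of_fintype]
  rw [hlapY, hlapX, map_sub, map_smul, map_sum]
  have hps : ∀ (v : Y.V) (b : ℤ),
      pushforward f (Finsupp.single v b) = Finsupp.single (f.fV v) b := by
    intro v b
    simp [pushforward, Finsupp.lmapDomain_apply, Finsupp.mapDomain_single]
  have hterm : ∀ ε : {ε : Y.E // Y.o ε = w},
      pushforward f (Finsupp.single (Y.t ε.1) (1:ℤ))
        = Finsupp.single (X.t (π ε).1) (1:ℤ) := by
    intro ε
    rw [hps]
    congr 1
    exact (f.t_map ε.1).symm
  rw [Finset.sum_congr rfl (fun ε _ => hterm ε),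
    key (fun e => Finsupp.single (X.t e.1) (1:ℤ)), hps]
  rw [smul_sub, Finset.smul_sum, smul_smul]
  congr 1
  rw [hval, Nat.mul_comm, Nat.cast_mul]


open SerreGraph in
/-- A branched cover `f : Y → X` of finite connected graphs induces a
surjective group homomorphism `f_* : Pic⁰(Y) → Pic⁰(X)` (given on classes by the pushforward
of divisors); consequently `κ(X) = |Pic⁰(X)|` divides `κ(Y) = |Pic⁰(Y)|`, i.e. the number of
spanning trees of `X` divides that of `Y` (Kirchhoff). -/
theorem pic0_pushforward_surjective (Y X : SerreGraph)
    [Fintype Y.V] [Finite Y.E] [Fintype X.V] [Finite X.E]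
    (f : Hom Y X) (m : Y.V → ℕ) (hbc : IsBranchedCover f m)
    (hYconn : Y.Connected) (hXconn : X.Connected) :
    (∃ φ : Y.Pic0 →ₗ[ℤ] X.Pic0, Function.Surjective φ ∧
      ∀ (D : Y.V →₀ ℤ) (hD : D ∈ Y.Div0) (hD' : pushforward f D ∈ X.Div0),
        φ (Submodule.Quotient.mk (⟨D, hD⟩ : Y.Div0))
          = Submodule.Quotient.mk (⟨pushforward f D, hD'⟩ : X.Div0)) ∧
    Nat.card X.Pic0 ∣ Nat.card Y.Pic0 := by
  classical
  obtain ⟨hV, hE, hfib⟩ := hbc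
  -- degree is preserved by pushforward
  have hdeg : ∀ D : Y.V →₀ ℤ, X.degMap (pushforward f D) = Y.degMap D := by
    have : (X.degMap).comp (pushforward f) = Y.degMap := by
      apply Finsupp.lhom_ext
      intro a b
      simp [pushforward, degMap, Finsupp.lmapDomain_apply, Finsupp.mapDomain_single,
        Finsupp.lsum_single]
    intro D
    exact congrArg (fun g => g D) this
  -- pushforward of a principal divisor is principal
  have hg : ∀ D : Y.V →₀ ℤ, pushforward f (Y.lap D) ∈ X.Pr := by
    set g : (Y.V →₀ ℤ) →ₗ[ℤ] (X.V →₀ ℤ) :=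
      Finsupp.lsum ℤ fun w => LinearMap.toSpanSingleton ℤ _
        (Finsupp.single (f.fV w) (m w : ℤ)) with hgdef
    have hcomp : (pushforward f).comp Y.lap = (X.lap).comp g := by
      apply Finsupp.lhom_ext
      intro a b
      have h1 : Finsupp.single a b = b • Finsupp.single a (1:ℤ) := by
        rw [Finsupp.smul_single, smul_eq_mul, mul_one]
      rw [LinearMap.comp_apply, LinearMap.comp_apply, hgdef, Finsupp.lsum_single,
        LinearMap.toSpanSingleton_apply, h1, map_smul, map_smul, map_smul,
        SerreGraph.push_lap_single Y X f m hfib a]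
    intro D
    rw [show pushforward f (Y.lap D) = ((pushforward f).comp Y.lap) D from rfl, hcomp]
    exact ⟨g D, rfl⟩
  have hmem : ∀ x ∈ Y.Div0, pushforward f x ∈ X.Div0 := by
    intro x hx
    rw [Div0, LinearMap.mem_ker] at *
    rw [hdeg, hx]
  set F : Y.Div0 →ₗ[ℤ] X.Div0 := (pushforward f).restrict hmem with hF
  have hker : Y.Pr.comap Y.Div0.subtype ≤
      LinearMap.ker (((X.Pr.comap X.Div0.subtype).mkQ).comp F) := by
    intro x hx
    rw [Submodule.mem_comap] at hx
    obtain ⟨D, hD⟩ := hx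
    rw [LinearMap.mem_ker, LinearMap.comp_apply, Submodule.mkQ_apply,
      Submodule.Quotient.mk_eq_zero, Submodule.mem_comap]
    show pushforward f x.1 ∈ X.Pr
    rw [show (x : Y.V →₀ ℤ) = Y.lap D from hD.symm]
    exact hg D
  set φ : Y.Pic0 →ₗ[ℤ] X.Pic0 :=
    Submodule.liftQ _ (((X.Pr.comap X.Div0.subtype).mkQ).comp F) hker with hφdef
  have hφmk : ∀ (D : Y.V →₀ ℤ) (hD : D ∈ Y.Div0) (hD' : pushforward f D ∈ X.Div0),
      φ (Submodule.Quotient.mk (⟨D, hD⟩ : Y.Div0))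
        = Submodule.Quotient.mk (⟨pushforward f D, hD'⟩ : X.Div0) := by
    intro D hD hD'
    rfl
  have hsurj : Function.Surjective φ := by
    intro q
    obtain ⟨x, rfl⟩ := Submodule.Quotient.mk_surjective _ q
    set s : X.V → Y.V := Function.surjInv hV with hs
    set E : Y.V →₀ ℤ := Finsupp.mapDomain s x.1 with hEdef
    have hpush : pushforward f E = x.1 := by
      rw [hEdef]
      show Finsupp.mapDomain f.fV (Finsupp.mapDomain s x.1) = x.1
      rw [← Finsupp.mapDomain_comp]
      have : f.fV ∘ s = id := funext fun v => Function.surjInv_eq hV v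
      rw [this, Finsupp.mapDomain_id]
    have hEdeg : E ∈ Y.Div0 := by
      have h1 := hdeg E
      rw [hpush] at h1
      have h2 : X.degMap x.1 = 0 := x.2
      rw [Div0, LinearMap.mem_ker, ← h1, h2]
    refine ⟨Submodule.Quotient.mk ⟨E, hEdeg⟩, ?_⟩
    rw [hφmk E hEdeg (hpush ▸ x.2)]
    congr 1
    exact Subtype.ext hpush
  refine ⟨⟨φ, hsurj, hφmk⟩, ?_⟩
  exact AddSubgroup.card_dvd_of_surjective φ.toAddMonoidHom hsurj
end

section
/- Let X be a graph, G a group, α: E_X -> G a voltage assignment (α(ē) = α(e)^{-1}), and I = {I_v : v ∈ V_X} a collection of subgroups of G. The derived graph Y = X(G, I, α), with vertex set the disjoint union over v of {v} × G/I_v, edge set E_X × G, origin of (e,σ) equal to (o(e), σI_{o(e)}), terminus (t(e), σα(e)I_{t(e)}), and inversion (e,σ)-bar = (ē, σα(e)), is a graph, and the natural projection p: Y -> X is a branched cover whose ramification index at any vertex (v, σI_v) equals |I_v|. -/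
namespace SerreGraph

variable (X : SerreGraph) (G : Type) [Group G]

/-- The derived graph `X(G, I, α)` of a voltage assignment `α` with a family of
subgroups `I`. -/
def Derived (I : X.V → Subgroup G) (α : X.E → G)
    (hα : ∀ e, α (X.inv e) = (α e)⁻¹) : SerreGraph where
  V := Σ v : X.V, G ⧸ I v
  E := X.E × G
  o := fun ε => ⟨X.o ε.1, QuotientGroup.mk ε.2⟩
  t := fun ε => ⟨X.t ε.1, QuotientGroup.mk (ε.2 * α ε.1)⟩
  inv := fun ε => (X.inv ε.1, ε.2 * α ε.1)
  inv_ne := fun ε h => X.inv_ne ε.1 (congrArg Prod.fst h)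
  inv_inv := fun ε => by
    have h1 := X.inv_inv ε.1
    have h2 := hα ε.1
    simp [h1, h2, mul_assoc]
  o_inv := fun ε =>
    congrArg (fun p => (⟨p, QuotientGroup.mk (ε.2 * α ε.1)⟩ : Σ v : X.V, G ⧸ I v))
      (X.o_inv ε.1)

/-- The natural projection `X(G, I, α) → X` is a morphism of graphs. -/
def derivedProj (I : X.V → Subgroup G) (α : X.E → G)
    (hα : ∀ e, α (X.inv e) = (α e)⁻¹) : Hom (X.Derived G I α hα) X where
  fV := fun w => w.1
  fE := fun ε => ε.1
  o_map := fun _ => rfl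
  t_map := fun _ => rfl
  inv_map := fun _ => rfl

end SerreGraph

theorem QuotientGroup.card_fiber_mk {α : Type*} [Group α] (s : Subgroup α) (q : α ⧸ s) :
    Nat.card {a : α // (a : α ⧸ s) = q} = Nat.card s :=
  (Nat.card_congr (QuotientGroup.preimageMkEquivSubgroupProdSet s {q})).trans (by simp)

namespace SerreGraph

variable {X : SerreGraph} {G : Type} [Group G] {I : X.V → Subgroup G} {α : X.E → G}
  {hα : ∀ e, α (X.inv e) = (α e)⁻¹}

theorem derived_o_eq_mk_iff (e : X.E) (σ : G) (q : G ⧸ I (X.o e)) :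
    (X.Derived G I α hα).o (e, σ) = ⟨X.o e, q⟩ ↔ (σ : G ⧸ I (X.o e)) = q := by
  simp [Derived]

def derivedEdgeFiberEquiv (e : X.E) (q : G ⧸ I (X.o e)) :
    {ε // (X.Derived G I α hα).o ε = ⟨X.o e, q⟩ ∧ (X.derivedProj G I α hα).fE ε = e} ≃
      {σ : G // (σ : G ⧸ I (X.o e)) = q} where
  toFun ε := ⟨ε.1.2, by
    obtain ⟨⟨e', σ⟩, ho, he⟩ := ε
    subst he
    exact (derived_o_eq_mk_iff e' σ q).1 ho⟩
  invFun σ := ⟨(e, σ.1), (derived_o_eq_mk_iff e σ.1 q).2 σ.2, rfl⟩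
  left_inv ε := Subtype.ext (Prod.ext ε.2.2.symm rfl)
  right_inv _ := rfl

end SerreGraph

open SerreGraph in
/-- The derived graph `Y = X(G, I, α)` of a voltage assignment
`α : E_X → G` (with `α(ē) = α(e)⁻¹`) and subgroups `I_v ≤ G` is a graph (witnessed by the
construction `SerreGraph.Derived`), and the natural projection `p : Y → X` is a branched
cover whose ramification index at any vertex `(v, σ I_v)` is `|I_v|`. -/
theorem derived_proj_is_branched_cover (X : SerreGraph) (G : Type) [Group G]
    (I : X.V → Subgroup G) (α : X.E → G) (hα : ∀ e, α (X.inv e) = (α e)⁻¹) :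
    IsBranchedCover (X.derivedProj G I α hα) (fun w => Nat.card (I w.1)) := by
  refine ⟨fun v => ⟨⟨v, QuotientGroup.mk 1⟩, rfl⟩, fun e => ⟨(e, 1), rfl⟩, ?_⟩
  rintro ⟨v, q⟩ e (rfl : X.o e = v)
  exact (Nat.card_congr (derivedEdgeFiberEquiv e q)).trans (QuotientGroup.card_fiber_mk _ q)
end

section
/- Let f: G_1 -> G_2 be a surjective group homomorphism, α: E_X -> G_1 a voltage assignment, and I a collection of subgroups I_v ≤ G_1. The induced map f_*: X(G_1, I, α) -> X(G_2, f(I), f∘α), given by (v, σ I_v) -> (v, f(σ)f(I_v)) and (e,σ) -> (e, f(σ)), is a branched cover of graphs, with ramification index at the vertex w = (v, σ_1 I_v) equal to |σ_1 I_v σ_1^{-1} ∩ ker(f)|. -/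
open SerreGraph in
/-- Let `f : G₁ →* G₂` be surjective, `α` a voltage assignment on `X` with
values in `G₁` and `I` a family of subgroups of `G₁`. The induced map
`f_* : X(G₁, I, α) → X(G₂, f(I), f∘α)`, `(v, σI_v) ↦ (v, f(σ)f(I_v))`, `(e,σ) ↦ (e, f(σ))`,
is a branched cover, with ramification index at `(v, σ₁ I_v)` equal to
`|σ₁ I_v σ₁⁻¹ ∩ ker f|`. -/
theorem derived_functorial_branched_cover (X : SerreGraph)
    (G₁ G₂ : Type) [Group G₁] [Group G₂] (f : G₁ →* G₂) (hf : Function.Surjective f)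
    (I : X.V → Subgroup G₁) (α : X.E → G₁) (hα : ∀ e, α (X.inv e) = (α e)⁻¹)
    (hα₂ : ∀ e, (f ∘ α) (X.inv e) = ((f ∘ α) e)⁻¹)
    (fV : (X.Derived G₁ I α hα).V → (X.Derived G₂ (fun v => (I v).map f) (f ∘ α) hα₂).V)
    (hfV : ∀ (v : X.V) (σ : G₁),
      fV ⟨v, QuotientGroup.mk σ⟩ = ⟨v, QuotientGroup.mk (f σ)⟩)
    (fE : (X.Derived G₁ I α hα).E → (X.Derived G₂ (fun v => (I v).map f) (f ∘ α) hα₂).E)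
    (hfE : fE = fun ε => (ε.1, f ε.2)) :
    -- `(fV, fE)` is a morphism of graphs:
    (∀ ε, (X.Derived G₂ (fun v => (I v).map f) (f ∘ α) hα₂).o (fE ε)
        = fV ((X.Derived G₁ I α hα).o ε)) ∧
    (∀ ε, (X.Derived G₂ (fun v => (I v).map f) (f ∘ α) hα₂).t (fE ε)
        = fV ((X.Derived G₁ I α hα).t ε)) ∧
    (∀ ε, (X.Derived G₂ (fun v => (I v).map f) (f ∘ α) hα₂).inv (fE ε)
        = fE ((X.Derived G₁ I α hα).inv ε)) ∧
    -- surjective on vertices and on directed edges: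
    Function.Surjective fV ∧ Function.Surjective fE ∧
    -- ramification index at `(v, σ₁ I_v)` is `|σ₁ I_v σ₁⁻¹ ∩ ker f|`:
    (∀ (v : X.V) (σ₁ : G₁) (ε₂ : (X.Derived G₂ (fun v => (I v).map f) (f ∘ α) hα₂).E),
      (X.Derived G₂ (fun v => (I v).map f) (f ∘ α) hα₂).o ε₂
          = fV ⟨v, QuotientGroup.mk σ₁⟩ →
        Nat.card {ε : (X.Derived G₁ I α hα).E //
            (X.Derived G₁ I α hα).o ε = ⟨v, QuotientGroup.mk σ₁⟩ ∧ fE ε = ε₂}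
          = Nat.card ((I v).map (MulAut.conj σ₁).toMonoidHom ⊓ f.ker : Subgroup G₁)) := by
  subst hfE
  refine ⟨?_, ?_, ?_, ?_, ?_, ?_⟩
  · intro ε
    show (⟨X.o ε.1, QuotientGroup.mk (f ε.2)⟩ : Σ v : X.V, G₂ ⧸ (I v).map f)
        = fV ⟨X.o ε.1, QuotientGroup.mk ε.2⟩
    rw [hfV]
  · intro ε
    show (⟨X.t ε.1, QuotientGroup.mk (f ε.2 * (f ∘ α) ε.1)⟩ : Σ v : X.V, G₂ ⧸ (I v).map f)
        = fV ⟨X.t ε.1, QuotientGroup.mk (ε.2 * α ε.1)⟩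
    rw [hfV]
    simp [Function.comp]
  · intro ε
    show (X.inv ε.1, f ε.2 * (f ∘ α) ε.1) = (X.inv ε.1, f (ε.2 * α ε.1))
    simp [Function.comp]
  · rintro ⟨v, q⟩
    induction q using QuotientGroup.induction_on with
    | H τ =>
      obtain ⟨σ, rfl⟩ := hf τ
      exact ⟨⟨v, QuotientGroup.mk σ⟩, hfV v σ⟩
  · rintro ⟨e, τ⟩
    obtain ⟨σ, rfl⟩ := hf τ
    exact ⟨(e, σ), rfl⟩
  · rintro v σ₁ ⟨e₂, τ₂⟩ h
    rw [hfV] at h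
    have hv : X.o e₂ = v := congrArg Sigma.fst h
    subst hv
    have hq : (QuotientGroup.mk τ₂ : G₂ ⧸ (I (X.o e₂)).map f) = QuotientGroup.mk (f σ₁) := by
      have h' : (⟨X.o e₂, QuotientGroup.mk τ₂⟩ : Σ v : X.V, G₂ ⧸ (I v).map f)
          = ⟨X.o e₂, QuotientGroup.mk (f σ₁)⟩ := h
      simpa using h'
    rw [QuotientGroup.eq] at hq
    obtain ⟨i, hi, hfi⟩ := hq
    have hfσ₀ : f (σ₁ * i⁻¹) = τ₂ := by
      have : f i = τ₂⁻¹ * f σ₁ := hfi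
      simp [this, mul_assoc]
    set σ₀ : G₁ := σ₁ * i⁻¹ with hσ₀
    refine Nat.card_congr ?_
    refine
      { toFun := fun ε => ⟨ε.1.2 * σ₀⁻¹, ?_⟩
        invFun := fun g => ⟨(e₂, g.1 * σ₀), ?_, ?_⟩
        left_inv := ?_
        right_inv := ?_ }
    · obtain ⟨⟨e, σ⟩, hcond, hpair⟩ := ε
      obtain ⟨he, hτ⟩ := Prod.mk.injEq .. ▸ hpair
      subst he
      have hqq : (QuotientGroup.mk σ : G₁ ⧸ I (X.o e)) = QuotientGroup.mk σ₁ := by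
        have h' : (⟨X.o e, QuotientGroup.mk σ⟩ : Σ v : X.V, G₁ ⧸ I v)
            = ⟨X.o e, QuotientGroup.mk σ₁⟩ := hcond
        simpa using h'
      rw [QuotientGroup.eq] at hqq
      -- hqq : σ⁻¹ * σ₁ ∈ I (X.o e)
      refine Subgroup.mem_inf.mpr ⟨?_, ?_⟩
      · refine ⟨(σ⁻¹ * σ₁)⁻¹ * i, mul_mem (inv_mem hqq) hi, ?_⟩
        simp only [MulEquiv.toMonoidHom_eq_coe, MonoidHom.coe_coe, MulAut.conj_apply]
        rw [hσ₀]
        group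
      · simp only [MonoidHom.mem_ker, map_mul, map_inv, hfσ₀, hτ]
        group
    · have hg := Subgroup.mem_inf.mp g.2
      obtain ⟨x, hx, hxg⟩ := hg.1
      simp only [MulEquiv.toMonoidHom_eq_coe, MonoidHom.coe_coe, MulAut.conj_apply] at hxg
      show (⟨X.o e₂, QuotientGroup.mk (g.1 * σ₀)⟩ : Σ v : X.V, G₁ ⧸ I v)
          = ⟨X.o e₂, QuotientGroup.mk σ₁⟩
      congr 1
      rw [QuotientGroup.eq]
      have : (g.1 * σ₀)⁻¹ * σ₁ = i * (σ₁⁻¹ * g.1⁻¹ * σ₁) := by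
        simp [hσ₀]; group
      rw [this]
      refine mul_mem hi ?_
      have : σ₁⁻¹ * g.1⁻¹ * σ₁ = x⁻¹ := by
        rw [← hxg]; group
      rw [this]
      exact inv_mem hx
    · have hg := Subgroup.mem_inf.mp g.2
      have : f g.1 = 1 := hg.2
      show ((e₂ : X.E), f (g.1 * σ₀)) = (e₂, τ₂)
      simp [this, hfσ₀]
    · rintro ⟨⟨e, σ⟩, hcond, hpair⟩
      have he : e = e₂ := congrArg Prod.fst hpair
      subst he
      simp
    · rintro ⟨g, hg⟩
      simp
end

section
/- Let X be a graph, G a group, α a voltage assignment, I = {I_v} finite subgroups of G, Y^{unr} = X(G,α), Y = X(G,I,α), with all graphs locally finite, and ι_*: Div(Y^{unr}) -> Div(Y) the surjective pushforward induced by the immersion ι. Then for all v ∈ V_X and σ ∈ G: L_Y(ι_*((v,σ))) = Σ_{i ∈ I_v} ι_*(L_{Y^{unr}}((v, σ·i))). -/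
namespace SerreGraph

variable (X : SerreGraph) (G : Type) [Group G]

/-- The unramified derived graph `X(G, α)` of a voltage assignment (all subgroups trivial). -/
def DerivedU (α : X.E → G) (hα : ∀ e, α (X.inv e) = (α e)⁻¹) : SerreGraph where
  V := X.V × G
  E := X.E × G
  o := fun ε => (X.o ε.1, ε.2)
  t := fun ε => (X.t ε.1, ε.2 * α ε.1)
  inv := fun ε => (X.inv ε.1, ε.2 * α ε.1)
  inv_ne := fun ε h => X.inv_ne ε.1 (congrArg Prod.fst h)
  inv_inv := fun ε => by
    have h1 := X.inv_inv ε.1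
    have h2 := hα ε.1
    simp [h1, h2, mul_assoc]
  o_inv := fun ε => by
    have h := X.o_inv ε.1
    simp [h]

/-- The natural immersion `ι : X(G, α) → X(G, I, α)`, `(v, σ) ↦ (v, σ I_v)` on vertices. -/
def iotaV (I : X.V → Subgroup G) (α : X.E → G) (hα : ∀ e, α (X.inv e) = (α e)⁻¹) :
    (X.DerivedU G α hα).V → (X.Derived G I α hα).V :=
  fun w => ⟨w.1, QuotientGroup.mk w.2⟩

end SerreGraph

/-! Both Laplacians are sums of `δ_{o e} - δ_{t e}` over the edges `e` leaving a vertex. The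
edges of `X(G,I,α)` leaving `(v, σI_v)` are the disjoint union over `i ∈ I_v` of the edges of
`X(G,α)` leaving `(v, σi)`, and `ι` is the identity on edges, so it preserves both endpoints. -/

namespace SerreGraph

open Function

theorem pairwise_disjoint_setOf_o_eq (X : SerreGraph) :
    Pairwise (Disjoint on fun w : X.V => {e : X.E | X.o e = w}) :=
  fun _ _ hne => Set.disjoint_left.mpr fun _ h₁ h₂ => hne (h₁.symm.trans h₂)

theorem lap_single_eq_finsum_mem (X : SerreGraph) {w : X.V} (hw : {e : X.E | X.o e = w}.Finite) :
    X.lap (Finsupp.single w 1) =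
      ∑ᶠ e ∈ {e : X.E | X.o e = w}, (Finsupp.single (X.o e) 1 - Finsupp.single (X.t e) 1) := by
  have := hw.fintype
  rw [← finsum_set_coe_eq_finsum_mem, finsum_eq_sum_of_fintype, Finset.sum_sub_distrib, lap,
    Finsupp.lsum_single, LinearMap.toSpanSingleton_apply, one_smul]
  congr 1
  · rw [Finset.sum_congr rfl fun e _ => by rw [show X.o e = w from e.2], Finset.sum_const,
      Finset.card_univ, ← Nat.card_eq_fintype_card, natCast_zsmul]
    rfl
  · exact @finsum_eq_sum_of_fintype _ _ _ this _

variable {X Y : SerreGraph}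

theorem pushforward_lap_single (f : Hom Y X) {w : Y.V} (hw : {e : Y.E | Y.o e = w}.Finite) :
    pushforward f (Y.lap (Finsupp.single w 1)) =
      ∑ᶠ e ∈ {e : Y.E | Y.o e = w},
        (Finsupp.single (X.o (f.fE e)) 1 - Finsupp.single (X.t (f.fE e)) 1) := by
  rw [Y.lap_single_eq_finsum_mem hw]
  refine ((pushforward f).toAddMonoidHom.map_finsum_mem _ hw).trans
    (finsum_mem_congr rfl fun e _ => ?_)
  simp [pushforward, Finsupp.mapDomain_sub, f.o_map, f.t_map]

variable (X) (G : Type) [Group G] (I : X.V → Subgroup G) (α : X.E → G)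
  (hα : ∀ e, α (X.inv e) = (α e)⁻¹)

def iota : Hom (X.DerivedU G α hα) (X.Derived G I α hα) where
  fV := X.iotaV G I α hα
  fE := id
  o_map _ := rfl
  t_map _ := rfl
  inv_map _ := rfl

theorem derived_setOf_o_eq_iUnion (v : X.V) (σ : G) :
    {ε : (X.Derived G I α hα).E | (X.Derived G I α hα).o ε = X.iotaV G I α hα (v, σ)} =
      ⋃ i : I v, {ε : (X.DerivedU G α hα).E | (X.DerivedU G α hα).o ε = (v, σ * i)} := by
  ext ⟨e, g⟩
  refine Iff.trans ?_ Set.mem_iUnion.symm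
  change (⟨X.o e, (g : G ⧸ I (X.o e))⟩ : Σ v, G ⧸ I v) = ⟨v, σ⟩ ↔
    ∃ i : I v, (X.o e, g) = (v, σ * i)
  constructor
  · intro h
    obtain ⟨rfl, h⟩ := Sigma.mk.inj_iff.mp h
    exact ⟨⟨σ⁻¹ * g, QuotientGroup.eq.mp (eq_of_heq h).symm⟩, by rw [mul_inv_cancel_left]⟩
  · rintro ⟨i, h⟩
    obtain ⟨rfl, rfl⟩ := Prod.mk.inj h
    rw [QuotientGroup.mk_mul_of_mem σ i.2]

theorem pairwise_disjoint_derivedU_setOf_o_eq (v : X.V) (σ : G) :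
    Pairwise (Disjoint on fun i : I v => {ε | (X.DerivedU G α hα).o ε = (v, σ * i)}) :=
  (X.DerivedU G α hα).pairwise_disjoint_setOf_o_eq.comp_of_injective fun _ _ h =>
    Subtype.ext (mul_left_cancel (congrArg Prod.snd h))

end SerreGraph

open SerreGraph in
/-- (Useful lemma.) With `Y^unr = X(G,α)`, `Y = X(G,I,α)` locally finite,
all `I_v` finite, and `ι_* : Div(Y^unr) → Div(Y)` the pushforward of the immersion `ι`, one
has, for all `v ∈ V_X` and `σ ∈ G`:
`L_Y(ι_*((v,σ))) = Σ_{i ∈ I_v} ι_*(L_{Y^unr}((v, σ·i)))`. -/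
theorem lap_iota_pushforward (X : SerreGraph) (G : Type) [Group G]
    (I : X.V → Subgroup G) (α : X.E → G) (hα : ∀ e, α (X.inv e) = (α e)⁻¹)
    [∀ w, Finite {ε : (X.DerivedU G α hα).E // (X.DerivedU G α hα).o ε = w}]
    [∀ w, Finite {ε : (X.Derived G I α hα).E // (X.Derived G I α hα).o ε = w}]
    [∀ v : X.V, Finite (I v)] :
    ∀ (v : X.V) (σ : G),
      (X.Derived G I α hα).lap
          (Finsupp.mapDomain (X.iotaV G I α hα) (Finsupp.single ((v, σ) :
            (X.DerivedU G α hα).V) (1 : ℤ)))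
        = ∑ᶠ i : (I v),
            Finsupp.mapDomain (X.iotaV G I α hα)
              ((X.DerivedU G α hα).lap (Finsupp.single ((v, σ * (i : G)) :
                (X.DerivedU G α hα).V) (1 : ℤ))) := by
  intro v σ
  have hfin : ∀ i : I v, {ε | (X.DerivedU G α hα).o ε = (v, σ * i)}.Finite :=
    fun i => Set.finite_coe_iff.mp (‹∀ w, Finite {ε // (X.DerivedU G α hα).o ε = w}› (v, σ * i))
  refine (congrArg _ Finsupp.mapDomain_single).trans ?_
  rw [lap_single_eq_finsum_mem _ (Set.finite_coe_iff.mp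
    (‹∀ w, Finite {ε // (X.Derived G I α hα).o ε = w}› _)), X.derived_setOf_o_eq_iUnion]
  refine (finsum_mem_iUnion (X.pairwise_disjoint_derivedU_setOf_o_eq G I α hα v σ) hfin).trans
    (finsum_congr fun i => ?_)
  exact (pushforward_lap_single (X.iota G I α hα) (hfin i)).symm
end

section
/- In the setting of the immersion ι: Y^{unr} = X(G,α) -> Y = X(G,I,α) with all I_v finite and graphs locally finite, the group Pr(Y) = Im(L_Y) is generated as a Z[G]-module by the elements Σ_{i ∈ I_v} i·P_v, as v ranges over V_X, where P_v = ι_*(L_{Y^{unr}}((v, 1_G))). -/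
namespace SerreGraph

variable (X : SerreGraph) (G : Type) [Group G]

/-- The action of `τ ∈ G` on the vertices of the derived graph `X(G, I, α)`. -/
def derivedVAct (I : X.V → Subgroup G) (τ : G) :
    (Σ v : X.V, G ⧸ I v) → Σ v : X.V, G ⧸ I v :=
  fun w => ⟨w.1, τ • w.2⟩

/-- The divisor `P_v = ι_*(L_{Y^unr}((v, 1_G))) ∈ Div(Y)`. -/
noncomputable def Pdiv (I : X.V → Subgroup G) (α : X.E → G)
    (hα : ∀ e, α (X.inv e) = (α e)⁻¹) (v : X.V) :
    ((X.Derived G I α hα).V →₀ ℤ) :=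
  Finsupp.mapDomain (X.iotaV G I α hα)
    ((X.DerivedU G α hα).lap
      (Finsupp.single ((v, (1 : G)) : (X.DerivedU G α hα).V) (1 : ℤ)))

end SerreGraph

/-! The principal divisors of `Y = X(G, I, α)` are spanned by the Laplacians of the vertices
`(v, τ I_v)`. The edges of `Y` at `(v, σ I_v)` are the `(e, σ i)` with `X.o e = v` and
`i ∈ I_v`, so grouping them by `i` gives the intertwining identity
`L_Y (v, σ I_v) = Σ_{i ∈ I_v} ι_* L_{Y^unr} (v, σ i)`. Since `ι_* L_{Y^unr} (v, τ g)` is the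
`τ`-translate of `ι_* L_{Y^unr} (v, g)`, this reads `L_Y (v, τ I_v) = τ · Σ_{i ∈ I_v} i · P_v`,
so the Laplacians of vertices are exactly the proposed generators. -/

namespace SerreGraph

open Finsupp

lemma mapDomain_smul_single_sub_finsum_single {A B ι : Type*} [Finite ι] (p : A → B) (n : ℤ)
    (a : A) (b : ι → A) :
    mapDomain p (n • single a 1 - ∑ᶠ i, single (b i) 1) =
      n • single (p a) 1 - ∑ᶠ i, single (p (b i)) (1 : ℤ) := by
  rw [← lmapDomain_apply ℤ ℤ, map_sub, map_smul, map_finsum _ (Set.toFinite _)]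
  simp only [lmapDomain_apply, mapDomain_single]

lemma range_eq_span_image_single {R M α : Type*} [Semiring R] [AddCommMonoid M] [Module R M]
    (f : (α →₀ R) →ₗ[R] M) :
    LinearMap.range f = Submodule.span R (Set.range fun a => f (single a 1)) := by
  rw [LinearMap.range_eq_map, ← (Finsupp.basisSingleOne (R := R) (ι := α)).span_eq,
    Submodule.map_span, ← Set.range_comp]
  rfl

lemma lap_single_eq_of_equiv (Z : SerreGraph) {w : Z.V} {ι : Type*}
    (f : ι ≃ {ε : Z.E // Z.o ε = w}) :
    Z.lap (single w 1) = (Nat.card ι : ℤ) • single w 1 - ∑ᶠ i, single (Z.t (f i)) 1 := by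
  rw [lap, lsum_single, LinearMap.toSpanSingleton_apply, one_smul, val, Nat.card_congr f.symm,
    finsum_comp_equiv f (f := fun ε : {ε : Z.E // Z.o ε = w} => single (Z.t ε.1) (1 : ℤ))]

variable (X : SerreGraph) (G : Type) [Group G] (I : X.V → Subgroup G) (α : X.E → G)
  (hα : ∀ e, α (X.inv e) = (α e)⁻¹)

def derivedUOutEdgesEquiv (v : X.V) (g : G) :
    {e : X.E // X.o e = v} ≃
      {ε : (X.DerivedU G α hα).E // (X.DerivedU G α hα).o ε = (v, g)} where
  toFun e := ⟨(e.1, g), congrArg (·, g) e.2⟩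
  invFun ε := ⟨ε.1.1, congrArg Prod.fst ε.2⟩
  left_inv _ := rfl
  right_inv := by
    rintro ⟨⟨e, h⟩, hε⟩
    obtain rfl : h = g := congrArg Prod.snd hε
    rfl

lemma finite_outEdges_of_derivedU
    [h : ∀ w, Finite {ε : (X.DerivedU G α hα).E // (X.DerivedU G α hα).o ε = w}] (v : X.V) :
    Finite {e : X.E // X.o e = v} :=
  have := h (v, 1)
  .of_equiv _ (X.derivedUOutEdgesEquiv G α hα v 1).symm

lemma inv_mul_mem_of_sigma_mk_eq {u v : X.V} {g σ : G}
    (h : (⟨u, (g : G ⧸ I u)⟩ : Σ w, G ⧸ I w) = ⟨v, (σ : G ⧸ I v)⟩) :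
    σ⁻¹ * g ∈ I v := by
  obtain ⟨rfl, h⟩ := Sigma.mk.inj_iff.mp h
  exact QuotientGroup.eq.mp (eq_of_heq h).symm

def derivedOutEdgesEquiv (v : X.V) (σ : G) :
    I v × {e : X.E // X.o e = v} ≃
      {ε : (X.Derived G I α hα).E // (X.Derived G I α hα).o ε = ⟨v, (σ : G ⧸ I v)⟩} where
  toFun p := ⟨(p.2.1, σ * p.1), by
    obtain ⟨⟨i, hi⟩, e, rfl⟩ := p
    exact congrArg (Sigma.mk (X.o e)) (QuotientGroup.mk_mul_of_mem σ hi)⟩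
  invFun ε := ⟨⟨σ⁻¹ * ε.1.2, X.inv_mul_mem_of_sigma_mk_eq G I ε.2⟩,
    ⟨ε.1.1, congrArg Sigma.fst ε.2⟩⟩
  left_inv _ := by simp
  right_inv _ := Subtype.ext (by simp only [mul_inv_cancel_left]; rfl)

noncomputable def iotaLap (v : X.V) (g : G) : (X.Derived G I α hα).V →₀ ℤ :=
  mapDomain (X.iotaV G I α hα) ((X.DerivedU G α hα).lap (single (v, g) 1))

variable [∀ v, Finite {e : X.E // X.o e = v}]

/- The ascription keeps the right-hand side at type `(X.Derived G I α hα).V →₀ ℤ`: this type is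
only definitionally `(Σ v, G ⧸ I v) →₀ ℤ`, the type `derivedVAct` lives on, so rewriting across
the two fails and the lemmas below go through `refine`/`rfl` instead. -/
lemma iotaLap_eq (v : X.V) (g : G) :
    X.iotaLap G I α hα v g =
      ((Nat.card {e : X.E // X.o e = v} : ℤ) • single ⟨v, (g : G ⧸ I v)⟩ 1
        - ∑ᶠ e : {e : X.E // X.o e = v},
            single ⟨X.t e, ((g * α e : G) : G ⧸ I (X.t e))⟩ 1 : (X.Derived G I α hα).V →₀ ℤ) := by
  rw [iotaLap, lap_single_eq_of_equiv _ (X.derivedUOutEdgesEquiv G α hα v g)]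
  exact mapDomain_smul_single_sub_finsum_single _ _ _ _

lemma mapDomain_derivedVAct_iotaLap (τ : G) (v : X.V) (g : G) :
    mapDomain (X.derivedVAct G I τ) (X.iotaLap G I α hα v g) = X.iotaLap G I α hα v (τ * g) := by
  rw [iotaLap_eq, iotaLap_eq]
  refine (mapDomain_smul_single_sub_finsum_single _ _ _ _).trans ?_
  simp only [derivedVAct, MulAction.Quotient.smul_coe, smul_eq_mul, mul_assoc]
  rfl

lemma lap_derived_single (v : X.V) [Finite (I v)] (σ : G) :
    (X.Derived G I α hα).lap (single ⟨v, (σ : G ⧸ I v)⟩ 1) =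
      ∑ᶠ i : I v, X.iotaLap G I α hα v (σ * i) := by
  classical
  have := Fintype.ofFinite (I v)
  have := Fintype.ofFinite {e : X.E // X.o e = v}
  rw [lap_single_eq_of_equiv _ (X.derivedOutEdgesEquiv G I α hα v σ), finsum_eq_sum_of_fintype,
    finsum_eq_sum_of_fintype]
  simp only [iotaLap_eq, finsum_eq_sum_of_fintype, Finset.sum_sub_distrib, Finset.sum_const,
    Finset.card_univ, Fintype.card_prod, Nat.card_eq_fintype_card, Fintype.sum_prod_type,
    QuotientGroup.mk_mul_of_mem σ (Subtype.property _)]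
  rw [Nat.cast_mul, mul_smul, Nat.cast_smul_eq_nsmul]
  rfl

lemma mapDomain_derivedVAct_finsum_Pdiv (v : X.V) [Finite (I v)] (τ : G) :
    mapDomain (X.derivedVAct G I τ)
        (∑ᶠ i : I v, mapDomain (X.derivedVAct G I (i : G)) (X.Pdiv G I α hα v)) =
      (X.Derived G I α hα).lap (single ⟨v, (τ : G ⧸ I v)⟩ 1) := by
  rw [lap_derived_single, ← lmapDomain_apply ℤ ℤ, map_finsum _ (Set.toFinite _)]
  refine finsum_congr fun i => ?_
  rw [lmapDomain_apply, Pdiv, ← iotaLap, mapDomain_derivedVAct_iotaLap,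
    mapDomain_derivedVAct_iotaLap, mul_one]

end SerreGraph

open SerreGraph in
/-- With `Y = X(G, I, α)` as above (all `I_v` finite, graphs locally
finite), `Pr(Y) = Im(L_Y)` is generated as a `ℤ[G]`-module (i.e. as a `ℤ`-module by all
`G`-translates) by the divisors `Σ_{i ∈ I_v} i·P_v`, `v ∈ V_X`, where
`P_v = ι_*(L_{Y^unr}((v, 1_G)))`. -/
theorem pr_generated_by_traces (X : SerreGraph) (G : Type) [Group G]
    (I : X.V → Subgroup G) (α : X.E → G) (hα : ∀ e, α (X.inv e) = (α e)⁻¹)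
    [∀ w, Finite {ε : (X.DerivedU G α hα).E // (X.DerivedU G α hα).o ε = w}]
    [∀ w, Finite {ε : (X.Derived G I α hα).E // (X.Derived G I α hα).o ε = w}]
    [∀ v : X.V, Finite (I v)] :
    LinearMap.range (X.Derived G I α hα).lap
      = Submodule.span ℤ
          {D : (X.Derived G I α hα).V →₀ ℤ | ∃ (τ : G) (v : X.V),
            D = Finsupp.mapDomain (X.derivedVAct G I τ)
              (∑ᶠ i : (I v),
                Finsupp.mapDomain (X.derivedVAct G I (i : G))
                  (X.Pdiv G I α hα v))} := by
  have := X.finite_outEdges_of_derivedU G α hα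
  rw [range_eq_span_image_single]
  congr 1
  ext D
  constructor
  · rintro ⟨⟨v, q⟩, rfl⟩
    obtain ⟨τ, rfl⟩ := QuotientGroup.mk_surjective q
    exact ⟨τ, v, (X.mapDomain_derivedVAct_finsum_Pdiv G I α hα v τ).symm⟩
  · rintro ⟨τ, v, rfl⟩
    exact ⟨_, (X.mapDomain_derivedVAct_finsum_Pdiv G I α hα v τ).symm⟩
end
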